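/- The full subcategory S10dlubpo of Dlubpo, consisting of all dlubpos satisfying the singleton axiom S3 and axiom S10, is cartesian closed, with the one-point terminal object, componentwise products D × E, and the pointwise exponents D ⇒ E (with pointwise natural convergence: F → f iff F(d) → f(d) for all d). -/

import Mathlib

universe u

/-- A set is directed: non-empty and upward directed. -/
def Dir {α : Type u} [Preorder α] (A : Set α) : Prop :=
  A.Nonempty ∧ DirectedOn (· ≤ ·) A

/-- The data of a directed-lub partial order. -/
structure PreDlubpo : Type (u + 1) where
  carrier : Type u
  [po : PartialOrder carrier]
  conv : Set carrier → carrier → Prop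

attribute [instance] PreDlubpo.po

/-- The dlubpo axioms, including the singleton axiom S3. -/
def IsDlubpo (D : PreDlubpo.{u}) : Prop :=
  (∀ (A : Set D.carrier) (a : D.carrier), D.conv A a → Dir A ∧ IsLUB A a) ∧
  ∀ a : D.carrier, D.conv {a} a

/-- Axiom S10: for a two-parametric family over a directed index partial order,
monotone in both parameters, if all rows converge (with the row-lubs converging
to `u`) and all columns converge (with the column-lubs converging to `u`), then
the diagonal converges to `u`. -/
def S10ax (D : PreDlubpo.{u}) : Prop :=
  ∀ (I : Type u) [PartialOrder I], Nonempty I →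
    (∀ i j : I, ∃ k : I, i ≤ k ∧ j ≤ k) →
    ∀ (y : I → I → D.carrier) (x z : I → D.carrier) (u : D.carrier),
      (∀ i : I, Monotone (y i)) → (∀ j : I, Monotone fun i => y i j) →
      (∀ i : I, D.conv (Set.range (y i)) (x i)) → D.conv (Set.range x) u →
      (∀ j : I, D.conv (Set.range fun i => y i j) (z j)) → D.conv (Set.range z) u →
      D.conv (Set.range fun i => y i i) u

/-- Continuous functions between dlubpos. -/
def Hom (D E : PreDlubpo.{u}) (f : D.carrier → E.carrier) : Prop :=
  Monotone f ∧ ∀ (A : Set D.carrier) (a : D.carrier), D.conv A a → E.conv (f '' A) (f a)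

/-- The one-point dlubpo. -/
def termD : PreDlubpo.{u} where
  carrier := PUnit
  conv A a := A = {a}

/-- The product dlubpo, with componentwise order and convergence. -/
def prodD (D E : PreDlubpo.{u}) : PreDlubpo.{u} where
  carrier := D.carrier × E.carrier
  conv A p := Dir A ∧ D.conv (Prod.fst '' A) p.1 ∧ E.conv (Prod.snd '' A) p.2

/-- The pointwise function space dlubpo `D ⇒ E`: continuous functions with
pointwise order and pointwise natural convergence of directed sets. -/
def expoPt (D E : PreDlubpo.{u}) : PreDlubpo.{u} where
  carrier := {f : D.carrier → E.carrier // Hom D E f}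
  conv F f := Dir F ∧ ∀ d : D.carrier, E.conv ((fun g => g.1 d) '' F) (f.1 d)

/-!
Everything is computed componentwise or pointwise, so the dlubpo axioms and S10 pass to
products and function spaces from the factors. The one point where S10 is indispensable is
the continuity of evaluation `(F, d) ↦ F d`: if `(F_i, d_i) → (f, a)` along a directed set,
the family `F_i (d_j)` has rows `F_i (d_j) →_j F_i a →_i f a` (continuity of each `F_i`,
then pointwise convergence) and columns `F_i (d_j) →_i f (d_j) →_j f a` (pointwise
convergence, then continuity of `f`), so S10 makes its diagonal `F_i (d_i)` converge to `f a`.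
The singleton axiom makes constant maps continuous, so the slices `d ↦ f (c, d)` of a
continuous `f` are continuous, which gives currying.
-/

namespace Dir

variable {α β : Type u} [Preorder α] [Preorder β]

theorem singleton (a : α) : Dir ({a} : Set α) :=
  ⟨Set.singleton_nonempty a, directedOn_singleton a⟩

theorem image {f : α → β} (hf : Monotone f) {A : Set α} (hA : Dir A) : Dir (f '' A) :=
  ⟨hA.1.image f, hA.2.mono_comp hf⟩

theorem range {I : Type u} [Preorder I] (hne : Nonempty I)
    (hI : ∀ i j : I, ∃ k, i ≤ k ∧ j ≤ k) {f : I → α} (hf : Monotone f) : Dir (Set.range f) := by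
  rw [← Set.image_univ]
  exact image hf ⟨Set.univ_nonempty, fun i _ j _ => (hI i j).imp fun k hk => ⟨trivial, hk⟩⟩

end Dir

theorem PreDlubpo.conv_image_image_iff {D : PreDlubpo.{u}} {α β : Type u} {g : β → D.carrier}
    {f : α → β} {A : Set α} {a : D.carrier} :
    D.conv (g '' (f '' A)) a ↔ D.conv ((fun x => g (f x)) '' A) a := by
  rw [Set.image_image]

theorem IsDlubpo.conv_image_singleton {D : PreDlubpo.{u}} (hD : IsDlubpo D) {α : Type u}
    (f : α → D.carrier) (a : α) : D.conv (f '' {a}) (f a) := by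
  rw [Set.image_singleton]; exact hD.2 _

theorem monotone_diag {I α : Type u} [Preorder I] [Preorder α] {y : I → I → α}
    (hy : ∀ i, Monotone (y i)) (hy' : ∀ j, Monotone fun i => y i j) :
    Monotone fun i => y i i :=
  fun _ _ h => (hy _ h).trans (hy' _ h)

namespace Hom

variable {C D E : PreDlubpo.{u}}

theorem id : Hom D D id :=
  ⟨monotone_id, fun A a h => by rwa [Set.image_id]⟩

theorem comp {g : D.carrier → E.carrier} {f : C.carrier → D.carrier} (hg : Hom D E g)
    (hf : Hom C D f) : Hom C E (g ∘ f) :=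
  ⟨hg.1.comp hf.1, fun A a h => by rw [Set.image_comp]; exact hg.2 _ _ (hf.2 A a h)⟩

theorem const (hD : IsDlubpo D) (hE : IsDlubpo E) (e : E.carrier) :
    Hom D E fun _ => e :=
  ⟨monotone_const, fun A a h => by
    rw [(hD.1 A a h).1.1.image_const]; exact hE.2 e⟩

theorem conv_range {f : D.carrier → E.carrier} (hf : Hom D E f) {I : Type u} {x : I → D.carrier}
    {a : D.carrier} (h : D.conv (Set.range x) a) : E.conv (Set.range (f ∘ x)) (f a) := by
  rw [Set.range_comp]; exact hf.2 _ _ h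

theorem fst : Hom (prodD D E) D Prod.fst :=
  ⟨monotone_fst, fun _ _ h => h.2.1⟩

theorem snd : Hom (prodD D E) E Prod.snd :=
  ⟨monotone_snd, fun _ _ h => h.2.2⟩

theorem prodMk (hC : IsDlubpo C) {f : C.carrier → D.carrier} {g : C.carrier → E.carrier}
    (hf : Hom C D f) (hg : Hom C E g) :
    Hom C (prodD D E) fun c => ((f c, g c) : D.carrier × E.carrier) :=
  have hfg : Monotone fun c => ((f c, g c) : D.carrier × E.carrier) :=
    fun _ _ h => ⟨hf.1 h, hg.1 h⟩
  ⟨hfg, fun A a h =>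
    ⟨(hC.1 A a h).1.image hfg, PreDlubpo.conv_image_image_iff.2 (hf.2 A a h),
      PreDlubpo.conv_image_image_iff.2 (hg.2 A a h)⟩⟩

theorem eval (d : D.carrier) : Hom (expoPt D E) E fun f => f.1 d :=
  ⟨fun _ _ h => h d, fun _ _ h => h.2 d⟩

theorem sliceRight (hC : IsDlubpo C) (hD : IsDlubpo D) {f : C.carrier × D.carrier → E.carrier}
    (hf : Hom (prodD C D) E f) (c : C.carrier) : Hom D E fun d => f (c, d) :=
  hf.comp (prodMk hD (const hD hC c) id)

theorem sliceLeft (hC : IsDlubpo C) (hD : IsDlubpo D) {f : C.carrier × D.carrier → E.carrier}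
    (hf : Hom (prodD C D) E f) (d : D.carrier) : Hom C E fun c => f (c, d) :=
  hf.comp (prodMk hC id (const hC hD d))

end Hom

namespace S10ax

variable {D E : PreDlubpo.{u}}

theorem conv_image_diag (hE : S10ax E) {p : D.carrier → E.carrier} (hp : Hom D E p)
    {I : Type u} [PartialOrder I] (hne : Nonempty I) (hI : ∀ i j : I, ∃ k, i ≤ k ∧ j ≤ k)
    {y : I → I → D.carrier} {x z : I → D.carrier} {u : D.carrier}
    (hy : ∀ i, Monotone (y i)) (hy' : ∀ j, Monotone fun i => y i j)
    (hx : ∀ i, D.conv (Set.range (y i)) (x i)) (hxu : D.conv (Set.range x) u)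
    (hz : ∀ j, D.conv (Set.range fun i => y i j) (z j)) (hzu : D.conv (Set.range z) u) :
    E.conv (p '' Set.range fun i => y i i) (p u) := by
  rw [← Set.range_comp]
  exact hE I hne hI (fun i j => p (y i j)) (p ∘ x) (p ∘ z) (p u)
    (fun i => hp.1.comp (hy i)) (fun j => hp.1.comp (hy' j))
    (fun i => hp.conv_range (hx i)) (hp.conv_range hxu)
    (fun j => hp.conv_range (hz j)) (hp.conv_range hzu)

theorem conv_image_diag_of_dir (hE : S10ax E) {P : Type u} [PartialOrder P] {A : Set P} (hA : Dir A)
    {φ : P → P → E.carrier} {x z : P → E.carrier} {u : E.carrier}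
    (hφ : ∀ p ∈ A, MonotoneOn (φ p) A) (hφ' : ∀ q ∈ A, MonotoneOn (φ · q) A)
    (hx : ∀ p ∈ A, E.conv (φ p '' A) (x p)) (hxu : E.conv (x '' A) u)
    (hz : ∀ q ∈ A, E.conv ((φ · q) '' A) (z q)) (hzu : E.conv (z '' A) u) :
    E.conv ((fun p => φ p p) '' A) u := by
  have hne : Nonempty A := hA.1.to_subtype
  rw [Set.image_eq_range] at hxu hzu ⊢
  refine hE A hne (fun i j => (hA.2 i i.2 j j.2).elim fun k hk => ⟨⟨k, hk.1⟩, hk.2⟩)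
    (fun i j => φ i j) (fun i => x i) (fun j => z j) u
    (fun i j k h => hφ i i.2 j.2 k.2 h) (fun j i k h => hφ' j j.2 i.2 k.2 h)
    (fun i => ?_) hxu (fun j => ?_) hzu
  · simpa only [Set.image_eq_range] using hx i i.2
  · simpa only [Set.image_eq_range] using hz j j.2

end S10ax

theorem isDlubpo_termD : IsDlubpo termD.{u} :=
  ⟨fun A a (h : A = {a}) => h ▸ ⟨Dir.singleton a, isLUB_singleton⟩, fun _ => rfl⟩

theorem s10ax_termD : S10ax termD.{u} :=
  fun _ _ _ _ _ _ _ u _ _ _ _ _ _ =>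
    Set.eq_singleton_iff_nonempty_unique_mem.2
      ⟨Set.range_nonempty _, fun _ _ => Subsingleton.elim (α := PUnit) _ u⟩

theorem existsUnique_hom_termD {C : PreDlubpo.{u}} (hC : IsDlubpo C) :
    ∃! f : C.carrier → termD.{u}.carrier, Hom C termD f :=
  ⟨fun _ => PUnit.unit, Hom.const hC isDlubpo_termD _,
    fun _ _ => funext fun _ => Subsingleton.elim (α := PUnit) _ _⟩

section Product

variable {D E : PreDlubpo.{u}}

theorem IsDlubpo.prodD (hD : IsDlubpo D) (hE : IsDlubpo E) : IsDlubpo (prodD D E) :=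
  ⟨fun _ _ h => ⟨h.1, isLUB_prod.2 ⟨(hD.1 _ _ h.2.1).2, (hE.1 _ _ h.2.2).2⟩⟩,
    fun p => ⟨Dir.singleton p, hD.conv_image_singleton _ p, hE.conv_image_singleton _ p⟩⟩

theorem S10ax.prodD (hD : S10ax D) (hE : S10ax E) : S10ax (prodD D E) :=
  fun _ _ hne hI _ _ _ _ hy hy' hx hxu hz hzu =>
    ⟨Dir.range hne hI (monotone_diag hy hy'),
      hD.conv_image_diag Hom.fst hne hI hy hy' hx hxu hz hzu,
      hE.conv_image_diag Hom.snd hne hI hy hy' hx hxu hz hzu⟩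

theorem existsUnique_hom_prodD {C : PreDlubpo.{u}} (hC : IsDlubpo C)
    {f : C.carrier → D.carrier} {g : C.carrier → E.carrier} (hf : Hom C D f) (hg : Hom C E g) :
    ∃! h : C.carrier → (prodD D E).carrier,
      Hom C (prodD D E) h ∧ Prod.fst ∘ h = f ∧ Prod.snd ∘ h = g :=
  ⟨fun c => (f c, g c), ⟨Hom.prodMk hC hf hg, rfl, rfl⟩,
    fun _ ⟨_, h₁, h₂⟩ => funext fun c => Prod.ext (congrFun h₁ c) (congrFun h₂ c)⟩

end Product

section Exponent

variable {D E : PreDlubpo.{u}}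

theorem IsDlubpo.expoPt (hE : IsDlubpo E) : IsDlubpo (expoPt D E) := by
  refine ⟨fun F f h => ⟨h.1, IsLUB.of_image (f := Subtype.val) Iff.rfl ?_⟩,
    fun f => ⟨Dir.singleton f, fun d => ?_⟩⟩
  · refine isLUB_pi.2 fun d => ?_
    exact (Set.image_image _ _ F).symm ▸ (hE.1 _ _ (h.2 d)).2
  · exact hE.conv_image_singleton _ f

theorem S10ax.expoPt (hE : S10ax E) : S10ax (expoPt D E) :=
  fun _ _ hne hI _ _ _ _ hy hy' hx hxu hz hzu =>
    ⟨Dir.range hne hI (monotone_diag hy hy'),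
      fun d => hE.conv_image_diag (Hom.eval d) hne hI hy hy' hx hxu hz hzu⟩

theorem Hom.evalProd (hE : S10ax E) :
    Hom (prodD (expoPt D E) D) E fun p => p.1.1 p.2 := by
  refine ⟨fun p q h => (h.1 p.2).trans (q.1.2.1 h.2), fun A p ⟨hA, hfst, hsnd⟩ => ?_⟩
  refine hE.conv_image_diag_of_dir hA (φ := fun q r => q.1.1 r.2) (x := fun q => q.1.1 p.2)
    (z := fun r => p.1.1 r.2) (fun q _ => (q.1.2.1.comp monotone_snd).monotoneOn _)
    (fun r _ _ _ _ _ h => h.1 r.2) (fun q _ => ?_) ?_ (fun r _ => ?_) ?_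
  · exact PreDlubpo.conv_image_image_iff.1 (q.1.2.2 _ _ hsnd)
  · exact PreDlubpo.conv_image_image_iff.1 (hfst.2 p.2)
  · exact PreDlubpo.conv_image_image_iff.1 (hfst.2 r.2)
  · exact PreDlubpo.conv_image_image_iff.1 (p.1.2.2 _ _ hsnd)

theorem existsUnique_curry {C : PreDlubpo.{u}} (hC : IsDlubpo C) (hD : IsDlubpo D)
    {f : C.carrier × D.carrier → E.carrier} (hf : Hom (prodD C D) E f) :
    ∃! h : C.carrier → (expoPt D E).carrier,
      Hom C (expoPt D E) h ∧ ∀ c d, (h c).1 d = f (c, d) := by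
  let h : C.carrier → (expoPt D E).carrier := fun c => ⟨_, hf.sliceRight hC hD c⟩
  have hmono : Monotone h := fun _ _ hc d => hf.1 ⟨hc, le_rfl⟩
  refine ⟨h, ⟨⟨hmono, fun B b hB => ⟨(hC.1 B b hB).1.image hmono, fun d => ?_⟩⟩,
    fun _ _ => rfl⟩, fun h' ⟨_, hh'⟩ => funext fun c => Subtype.ext (funext (hh' c))⟩
  exact PreDlubpo.conv_image_image_iff.2 ((hf.sliceLeft hC hD d).2 B b hB)

end Exponent

/-- The full subcategory of dlubpos satisfying the singleton axiom S3 and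
axiom S10 is cartesian closed, with the one-point terminal object,
componentwise products and the pointwise exponents `D ⇒ E`. -/
theorem stmt16 :
    -- terminal object
    (IsDlubpo termD.{u} ∧ S10ax termD.{u} ∧
      ∀ C : PreDlubpo.{u}, IsDlubpo C → S10ax C →
        ∃! f : C.carrier → termD.{u}.carrier, Hom C termD f) ∧
    -- binary products
    (∀ D E : PreDlubpo.{u}, IsDlubpo D → S10ax D → IsDlubpo E → S10ax E →
      IsDlubpo (prodD D E) ∧ S10ax (prodD D E) ∧
      Hom (prodD D E) D Prod.fst ∧ Hom (prodD D E) E Prod.snd ∧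
      ∀ C : PreDlubpo.{u}, IsDlubpo C → S10ax C →
        ∀ (f : C.carrier → D.carrier) (g : C.carrier → E.carrier),
          Hom C D f → Hom C E g →
          ∃! h : C.carrier → (prodD D E).carrier,
            Hom C (prodD D E) h ∧ Prod.fst ∘ h = f ∧ Prod.snd ∘ h = g) ∧
    -- exponents
    (∀ D E : PreDlubpo.{u}, IsDlubpo D → S10ax D → IsDlubpo E → S10ax E →
      IsDlubpo (expoPt D E) ∧ S10ax (expoPt D E) ∧
      Hom (prodD (expoPt D E) D) E (fun p => p.1.1 p.2) ∧
      ∀ C : PreDlubpo.{u}, IsDlubpo C → S10ax C →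
        ∀ f : (prodD C D).carrier → E.carrier, Hom (prodD C D) E f →
          ∃! h : C.carrier → (expoPt D E).carrier,
            Hom C (expoPt D E) h ∧ ∀ (c : C.carrier) (d : D.carrier),
              (h c).1 d = f (c, d)) := by
  refine ⟨⟨isDlubpo_termD, s10ax_termD, fun _ hC _ => existsUnique_hom_termD hC⟩,
    fun D E hD hDs hE hEs => ⟨hD.prodD hE, hDs.prodD hEs, Hom.fst, Hom.snd,
      fun _ hC _ _ _ hf hg => existsUnique_hom_prodD hC hf hg⟩,
    fun D E hD hDs hE hEs => ⟨hE.expoPt, hEs.expoPt, Hom.evalProd hEs,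
      fun _ hC _ _ hf => existsUnique_curry hC hD hf⟩⟩
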